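/- arXiv:2407.02624 — 2 statements merged into one kernel-verified Lean document; each statement's English description precedes it below -/
import Mathlib

section
/- Ball-growing lemma: Let G = (V, E, α) be an information graph, let x ≥ 0, and let v, u be vertices with prox_G(v, u) < x. Suppose an augmented information graph G' = G + S is formed by adding a set S of k new edges, all of whose endpoints w satisfy prox_G(v, w) < x (i.e., the endpoints are disjoint from the x-neighborhood N_x(v) = {w : prox_G(v, w) ≥ x}). Then prox_{G'}(v, u) ≤ x(1 + 2kα). -/
/-!
Condition on the sample `A ⊆ E` of the old edges. In a sample `A ∪ B` with `B ⊆ S`, a walk from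
`v` to `u` either stays inside `A`, or its first edge from `B` starts at an endpoint `w` of some
`e ∈ B` that `v` already reaches inside `A`. Hence
`1[v ~ u in A ∪ B] ≤ 1[v ~ u in A] + ∑_{e ∈ B} ∑_{w ∈ e} 1[v ~ w in A]`.
Averaging over `B`, each `e ∈ S` is retained with probability `α`; averaging then over `A` gives
`prox_{E ∪ S}(v, u) ≤ prox_E(v, u) + α ∑_{e ∈ S} ∑_{w ∈ e} prox_E(v, w) ≤ x + 2kαx`.
-/

open scoped Classical

variable {V : Type*} [Fintype V] [DecidableEq V]

/-- The proximity of `u` and `v` in the information graph `(V, E, α)`: the probability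
that `u` and `v` are connected in a graph obtained by retaining each edge of `E`
independently with probability `α`. -/
noncomputable def prox (E : Finset (Sym2 V)) (α : ℝ) (u v : V) : ℝ :=
  ∑ F ∈ E.powerset,
    if (SimpleGraph.fromEdgeSet (F : Set (Sym2 V))).Reachable u v then
      α ^ F.card * (1 - α) ^ (E \ F).card
    else 0

/-- The broadcast of an information graph: the minimum proximity over pairs of distinct
vertices. -/
noncomputable def broadcast (E : Finset (Sym2 V)) (α : ℝ) : ℝ :=
  ⨅ p : {p : V × V // p.1 ≠ p.2}, prox E α p.1.1 p.1.2

/-- The optimum broadcast achievable by adding at most `k` vertex pairs disjoint from `E`. -/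
noncomputable def optBroadcast (E : Finset (Sym2 V)) (α : ℝ) (k : ℕ) : ℝ :=
  ⨆ F : {F : Finset (Sym2 V) // F.card ≤ k ∧ ∀ e ∈ F, e ∉ E}, broadcast (E ∪ F.1) α

/-- The reach of a vertex `v`: the minimum proximity of `v` to any other vertex. -/
noncomputable def reach (E : Finset (Sym2 V)) (α : ℝ) (v : V) : ℝ :=
  ⨅ u : {u : V // u ≠ v}, prox E α v u.1

/-- The optimum reach of a source vertex `vs` achievable by adding at most `k`
vertex pairs disjoint from `E`. -/
noncomputable def optReach (E : Finset (Sym2 V)) (α : ℝ) (k : ℕ) (vs : V) : ℝ :=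
  ⨆ F : {F : Finset (Sym2 V) // F.card ≤ k ∧ ∀ e ∈ F, e ∉ E}, reach (E ∪ F.1) α vs

/-- The probability that, in a sampled graph, all edges of at least one member of the
family `P` of edge-lists are retained. -/
noncomputable def prPaths (E : Finset (Sym2 V)) (α : ℝ) (P : Set (List (Sym2 V))) : ℝ :=
  ∑ F ∈ E.powerset,
    if ∃ p ∈ P, ∀ e ∈ p, e ∈ F then α ^ F.card * (1 - α) ^ (E \ F).card
    else 0

namespace Finset

variable {ι : Type*} [DecidableEq ι] {M : Type*} [AddCommMonoid M]

theorem sum_powerset_union_of_disjoint {s t : Finset ι} (hst : Disjoint s t)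
    (f : Finset ι → M) :
    ∑ u ∈ (s ∪ t).powerset, f u = ∑ a ∈ s.powerset, ∑ b ∈ t.powerset, f (a ∪ b) := by
  have hsplit : ∀ {a b : Finset ι}, a ⊆ s → b ⊆ t → (a ∪ b) ∩ s = a ∧ (a ∪ b) ∩ t = b :=
    fun ha hb => by
      simp only [union_inter_distrib_right, inter_eq_left.2 ha, inter_eq_left.2 hb,
        disjoint_iff_inter_eq_empty.1 (hst.symm.mono_left hb),
        disjoint_iff_inter_eq_empty.1 (hst.mono_left ha), union_empty, empty_union, and_self]
  have himage : (s ∪ t).powerset = (s.powerset ×ˢ t.powerset).image fun p => p.1 ∪ p.2 := by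
    rw [powerset_union]; rfl
  rw [himage, sum_image, sum_product]
  rintro ⟨a, b⟩ hab ⟨a', b'⟩ hab' h
  simp only [coe_product, Set.mem_prod, mem_coe, mem_powerset] at hab hab' h
  obtain ⟨ha, hb⟩ := hsplit hab.1 hab.2
  obtain ⟨ha', hb'⟩ := hsplit hab'.1 hab'.2
  rw [h] at ha hb
  exact Prod.ext (ha.symm.trans ha') (hb.symm.trans hb')

end Finset

section SampleWeight

variable {β : Type*} [DecidableEq β] {α : ℝ}

noncomputable def sampleWeight (α : ℝ) (T F : Finset β) : ℝ :=
  α ^ F.card * (1 - α) ^ (T \ F).card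

theorem sampleWeight_nonneg (hα0 : 0 ≤ α) (hα1 : α ≤ 1) (T F : Finset β) :
    0 ≤ sampleWeight α T F :=
  mul_nonneg (pow_nonneg hα0 _) (pow_nonneg (sub_nonneg.2 hα1) _)

theorem sum_sampleWeight (T : Finset β) : ∑ F ∈ T.powerset, sampleWeight α T F = 1 := by
  have h := Finset.prod_add (fun _ => α) (fun _ => 1 - α) T
  simp only [Finset.prod_const, add_sub_cancel, one_pow] at h
  simpa [sampleWeight] using h.symm

theorem sampleWeight_union {s t a b : Finset β} (hst : Disjoint s t) (ha : a ⊆ s) (hb : b ⊆ t) :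
    sampleWeight α (s ∪ t) (a ∪ b) = sampleWeight α s a * sampleWeight α t b := by
  have hsdiff : (s ∪ t) \ (a ∪ b) = (s \ a) ∪ (t \ b) := by
    ext y
    simp only [Finset.mem_sdiff, Finset.mem_union]
    have := Finset.disjoint_left.1 hst
    grind
  rw [sampleWeight, sampleWeight, sampleWeight, hsdiff,
    Finset.card_union_of_disjoint (hst.mono ha hb),
    Finset.card_union_of_disjoint (hst.mono Finset.sdiff_subset Finset.sdiff_subset)]
  ring

theorem sum_sampleWeight_filter_mem {T : Finset β} {e : β} (he : e ∈ T) :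
    ∑ F ∈ T.powerset with e ∈ F, sampleWeight α T F = α := by
  have he' : e ∉ T.erase e := T.notMem_erase e
  have hweight : ∀ F ∈ (T.erase e).powerset,
      sampleWeight α (insert e (T.erase e)) (insert e F) = α * sampleWeight α (T.erase e) F :=
    fun F hF => by
      rw [Finset.insert_eq, Finset.insert_eq, sampleWeight_union
        (Finset.disjoint_singleton_left.2 he') subset_rfl (Finset.mem_powerset.1 hF)]
      simp [sampleWeight]
  rw [← Finset.insert_erase he, Finset.sum_filter, Finset.sum_powerset_insert he',
    Finset.sum_eq_zero fun F hF => if_neg fun h => he' (Finset.mem_powerset.1 hF h), zero_add]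
  simp only [Finset.mem_insert_self, if_true]
  rw [Finset.sum_congr rfl hweight, ← Finset.mul_sum, sum_sampleWeight, mul_one]

theorem sum_sampleWeight_mul_sum (T : Finset β) (g : β → ℝ) :
    ∑ F ∈ T.powerset, sampleWeight α T F * ∑ e ∈ F, g e = α * ∑ e ∈ T, g e := by
  have hswap : ∀ F ∈ T.powerset, sampleWeight α T F * ∑ e ∈ F, g e
      = ∑ e ∈ T, if e ∈ F then sampleWeight α T F * g e else 0 := fun F hF => by
    rw [Finset.sum_ite_mem, Finset.inter_eq_right.2 (Finset.mem_powerset.1 hF), Finset.mul_sum]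
  rw [Finset.sum_congr rfl hswap, Finset.sum_comm, Finset.mul_sum]
  refine Finset.sum_congr rfl fun e he => ?_
  rw [← Finset.sum_filter, ← Finset.sum_mul, sum_sampleWeight_filter_mem he]

end SampleWeight

namespace SimpleGraph

variable {W : Type*} {G H : SimpleGraph W}

theorem Reachable.or_exists_adj_of_sup {v u : W} (h : (G ⊔ H).Reachable v u) :
    G.Reachable v u ∨ ∃ a b, H.Adj a b ∧ G.Reachable v a := by
  obtain ⟨p⟩ := h
  induction p with
  | nil => exact Or.inl .rfl
  | @cons a b c hab p ih =>
    rcases (sup_adj G H a b).1 hab with hG | hH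
    · exact ih.imp hG.reachable.trans fun ⟨w, w', hw, hr⟩ => ⟨w, w', hw, hG.reachable.trans hr⟩
    · exact Or.inr ⟨a, b, hH, .rfl⟩

end SimpleGraph

section Reachability

variable {W : Type*}

noncomputable def reachIndicator (F : Finset (Sym2 W)) (v u : W) : ℝ :=
  if (SimpleGraph.fromEdgeSet (F : Set (Sym2 W))).Reachable v u then 1 else 0

theorem reachIndicator_nonneg (F : Finset (Sym2 W)) (v u : W) : 0 ≤ reachIndicator F v u := by
  unfold reachIndicator; split_ifs <;> norm_num

theorem reachIndicator_union_le [DecidableEq W] (A B : Finset (Sym2 W)) (v u : W) :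
    reachIndicator (A ∪ B) v u ≤
      reachIndicator A v u + ∑ e ∈ B, ∑ w ∈ e.toFinset, reachIndicator A v w := by
  have hsum_nonneg : 0 ≤ ∑ e ∈ B, ∑ w ∈ e.toFinset, reachIndicator A v w :=
    Finset.sum_nonneg fun e _ => Finset.sum_nonneg fun w _ => reachIndicator_nonneg A v w
  rw [reachIndicator]
  split_ifs with hreach
  swap
  · exact add_nonneg (reachIndicator_nonneg A v u) hsum_nonneg
  rw [Finset.coe_union, SimpleGraph.fromEdgeSet_union] at hreach
  rcases hreach.or_exists_adj_of_sup with hA | ⟨a, b, hab, hA⟩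
  · rw [reachIndicator, if_pos hA]
    linarith
  have hmem : s(a, b) ∈ B := ((SimpleGraph.fromEdgeSet_adj _).1 hab).1
  calc (1 : ℝ) = reachIndicator A v a := (if_pos hA).symm
    _ ≤ ∑ w ∈ s(a, b).toFinset, reachIndicator A v w :=
      Finset.single_le_sum (fun w _ => reachIndicator_nonneg A v w) (by simp)
    _ ≤ ∑ e ∈ B, ∑ w ∈ e.toFinset, reachIndicator A v w :=
      Finset.single_le_sum
        (fun e _ => Finset.sum_nonneg fun w _ => reachIndicator_nonneg A v w) hmem
    _ ≤ _ := le_add_of_nonneg_left (reachIndicator_nonneg A v u)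

end Reachability

theorem prox_eq_sum_sampleWeight_mul (E : Finset (Sym2 V)) (α : ℝ) (v u : V) :
    prox E α v u = ∑ F ∈ E.powerset, sampleWeight α E F * reachIndicator F v u := by
  refine Finset.sum_congr rfl fun F _ => ?_
  unfold reachIndicator
  split_ifs <;> simp [sampleWeight]

theorem prox_union_le {E S : Finset (Sym2 V)} {α : ℝ} (hα0 : 0 ≤ α) (hα1 : α ≤ 1)
    (hES : Disjoint E S) (v u : V) :
    prox (E ∪ S) α v u ≤ prox E α v u + α * ∑ e ∈ S, ∑ w ∈ e.toFinset, prox E α v w := by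
  have hinner : ∀ A : Finset (Sym2 V),
      ∑ B ∈ S.powerset, sampleWeight α S B * reachIndicator (A ∪ B) v u ≤
        reachIndicator A v u + α * ∑ e ∈ S, ∑ w ∈ e.toFinset, reachIndicator A v w := fun A =>
    calc _ ≤ ∑ B ∈ S.powerset, sampleWeight α S B *
            (reachIndicator A v u + ∑ e ∈ B, ∑ w ∈ e.toFinset, reachIndicator A v w) :=
          Finset.sum_le_sum fun B _ => mul_le_mul_of_nonneg_left
            (reachIndicator_union_le A B v u) (sampleWeight_nonneg hα0 hα1 S B)
      _ = _ := by
          simp only [mul_add, Finset.sum_add_distrib, ← Finset.sum_mul, sum_sampleWeight, one_mul,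
            sum_sampleWeight_mul_sum]
  calc prox (E ∪ S) α v u
      = ∑ A ∈ E.powerset, sampleWeight α E A *
          ∑ B ∈ S.powerset, sampleWeight α S B * reachIndicator (A ∪ B) v u := by
        rw [prox_eq_sum_sampleWeight_mul, Finset.sum_powerset_union_of_disjoint hES]
        refine Finset.sum_congr rfl fun A hA => ?_
        rw [Finset.mul_sum]
        refine Finset.sum_congr rfl fun B hB => ?_
        rw [sampleWeight_union hES (Finset.mem_powerset.1 hA) (Finset.mem_powerset.1 hB), mul_assoc]
    _ ≤ ∑ A ∈ E.powerset, sampleWeight α E A *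
          (reachIndicator A v u + α * ∑ e ∈ S, ∑ w ∈ e.toFinset, reachIndicator A v w) :=
        Finset.sum_le_sum fun A _ =>
          mul_le_mul_of_nonneg_left (hinner A) (sampleWeight_nonneg hα0 hα1 E A)
    _ = _ := by
        simp only [prox_eq_sum_sampleWeight_mul, mul_add, Finset.sum_add_distrib, Finset.mul_sum]
        congr 1
        rw [Finset.sum_comm]
        refine Finset.sum_congr rfl fun e _ => ?_
        rw [Finset.sum_comm]
        exact Finset.sum_congr rfl fun w _ => Finset.sum_congr rfl fun A _ => by ring

/-- ball-growing lemma. Adding `k` edges whose endpoints all lie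
outside the `x`-neighborhood of `v` increases the proximity of `v` to `u` to at
most `x(1 + 2kα)`. -/
theorem ball_growing
    (E : Finset (Sym2 V)) (α : ℝ) (hα0 : 0 ≤ α) (hα1 : α ≤ 1)
    (x : ℝ) (hx : 0 ≤ x) (v u : V) (hvu : prox E α v u < x)
    (k : ℕ) (S : Finset (Sym2 V)) (hcard : S.card = k) (hnew : ∀ e ∈ S, e ∉ E)
    (hfar : ∀ e ∈ S, ∀ w ∈ e, prox E α v w < x) :
    prox (E ∪ S) α v u ≤ x * (1 + 2 * (k : ℝ) * α) := by
  have hendpoints : ∀ e ∈ S, ∑ w ∈ e.toFinset, prox E α v w ≤ 2 * x := fun e he =>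
    calc ∑ w ∈ e.toFinset, prox E α v w ≤ e.toFinset.card • x :=
          Finset.sum_le_card_nsmul _ _ _ fun w hw => (hfar e he w (Sym2.mem_toFinset.1 hw)).le
      _ ≤ 2 • x := nsmul_le_nsmul_left hx
          ((Multiset.toFinset_card_le _).trans e.card_toMultiset.le)
      _ = 2 * x := two_nsmul x |>.trans (two_mul x).symm
  calc prox (E ∪ S) α v u
      ≤ prox E α v u + α * ∑ e ∈ S, ∑ w ∈ e.toFinset, prox E α v w :=
        prox_union_le hα0 hα1 (Finset.disjoint_left.2 fun {e} he hS => hnew e hS he) v u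
    _ ≤ x + α * ∑ _e ∈ S, 2 * x :=
        add_le_add hvu.le (mul_le_mul_of_nonneg_left (Finset.sum_le_sum hendpoints) hα0)
    _ = x * (1 + 2 * (k : ℝ) * α) := by rw [Finset.sum_const, hcard, nsmul_eq_mul]; ring
end

section
/- Close-center lemma: Let (G = (V, E, α), k) be an instance of Broadcast Improvement with optimum broadcast β*. Then there exists a set X̂ ⊆ V of at most k + 1 vertices such that for every vertex w ∈ V, at least one vertex s ∈ X̂ satisfies prox_G(w, s) ≥ β*/2^{k+1} (equivalently, in the implied metric φ(u, v) = −log prox_G(u, v), every vertex is within distance −log β* + k + 1 of some vertex of X̂). -/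
open scoped Classical

variable {V : Type*} [Fintype V] [DecidableEq V]

/-!
Fix a vertex `v` and an optimal set `F` of at most `k` added pairs: in `G + F` every vertex has
proximity at least `β*` to `v`. We delete the edges of `F` one at a time, at the price of one new
centre and a factor `2` each. Suppose the centres `X` serve every vertex at level `L` in `G + ab`,
and let `b` be the endpoint worse served by `X`, so `prox(s, b) ≤ prox(a, sₐ)` for some `sₐ ∈ X`
and all `s ∈ X`. Let `w` be served by `s ∈ X` and let `M` be the best proximity of `w` to `X ∪ {b}`
in `G`. Sampled paths from `w` to `s` through `ab` either go from `w` to `a` and from `b` to `s`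
with `s` not reaching `a` — by independence of the edges outside the component of `s` and Harris'
inequality this costs at most `prox(w, a) prox(s, b) (1 - prox(s, a)) ≤ M (1 - prox(s, a))` — or
go from `w` to `b` and from `a` to `s`, costing at most `M prox(s, a)`. Together with the paths
avoiding `ab` this gives `L ≤ 2M`.
-/

section Sampling

variable {ι : Type*} [DecidableEq ι]

noncomputable def sampleProb (E : Finset ι) (α : ℝ) (S : Finset ι → Prop) : ℝ :=
  ∑ F ∈ E.powerset, if S F then α ^ F.card * (1 - α) ^ (E \ F).card else 0

variable {E : Finset ι} {α : ℝ} {S T : Finset ι → Prop}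

theorem sampleProb_empty (α : ℝ) (S : Finset ι → Prop) :
    sampleProb ∅ α S = if S ∅ then 1 else 0 := by
  simp [sampleProb]

theorem sampleProb_congr (h : ∀ F ⊆ E, (S F ↔ T F)) : sampleProb E α S = sampleProb E α T :=
  Finset.sum_congr rfl fun F hF => by rw [h F (Finset.mem_powerset.1 hF)]

theorem sampleProb_mono (hα0 : 0 ≤ α) (hα1 : α ≤ 1) (h : ∀ F ⊆ E, S F → T F) :
    sampleProb E α S ≤ sampleProb E α T := by
  refine Finset.sum_le_sum fun F hF => ?_
  have hw : 0 ≤ α ^ F.card * (1 - α) ^ (E \ F).card := by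
    have := sub_nonneg.2 hα1
    positivity
  by_cases hS : S F
  · rw [if_pos hS, if_pos (h F (Finset.mem_powerset.1 hF) hS)]
  · rw [if_neg hS]
    split_ifs <;> linarith

theorem sampleProb_nonneg (hα0 : 0 ≤ α) (hα1 : α ≤ 1) (S : Finset ι → Prop) :
    0 ≤ sampleProb E α S := by
  calc (0 : ℝ) = sampleProb E α (fun _ => False) := by simp [sampleProb]
    _ ≤ sampleProb E α S := sampleProb_mono hα0 hα1 fun _ _ => False.elim

theorem sampleProb_and_add_and_not (S T : Finset ι → Prop) :
    sampleProb E α (fun F => S F ∧ T F) + sampleProb E α (fun F => S F ∧ ¬ T F) =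
      sampleProb E α S := by
  rw [sampleProb, sampleProb, ← Finset.sum_add_distrib]
  refine Finset.sum_congr rfl fun F _ => ?_
  by_cases hS : S F <;> by_cases hT : T F <;> simp [hS, hT]

theorem sampleProb_or_le (hα0 : 0 ≤ α) (hα1 : α ≤ 1) (S T : Finset ι → Prop) :
    sampleProb E α (fun F => S F ∨ T F) ≤ sampleProb E α S + sampleProb E α T := by
  rw [← sampleProb_and_add_and_not (fun F => S F ∨ T F) S]
  gcongr
  · exact sampleProb_mono hα0 hα1 fun _ _ h => h.2
  · exact sampleProb_mono hα0 hα1 fun _ _ h => h.1.resolve_left h.2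

theorem sampleProb_eq_sum_fiber {β : Type*} [Fintype β] (g : Finset ι → β)
    (S : Finset ι → Prop) :
    sampleProb E α S = ∑ c, sampleProb E α (fun F => S F ∧ g F = c) := by
  simp only [sampleProb]
  rw [Finset.sum_comm]
  refine Finset.sum_congr rfl fun F _ => ?_
  by_cases hS : S F <;> simp [hS]

theorem sampleProb_insert {e : ι} (he : e ∉ E) (S : Finset ι → Prop) :
    sampleProb (insert e E) α S =
      (1 - α) * sampleProb E α S + α * sampleProb E α (fun F => S (insert e F)) := by
  rw [sampleProb, Finset.sum_powerset_insert he, sampleProb, sampleProb, Finset.mul_sum,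
    Finset.mul_sum]
  congr 1 <;> refine Finset.sum_congr rfl fun F hF => ?_
  · have heF : e ∉ F := fun h => he (Finset.mem_powerset.1 hF h)
    rw [Finset.insert_sdiff_of_notMem _ heF,
      Finset.card_insert_of_notMem fun h => he (Finset.mem_sdiff.1 h).1]
    split_ifs <;> ring
  · have heF : e ∉ F := fun h => he (Finset.mem_powerset.1 hF h)
    rw [Finset.insert_sdiff_insert, Finset.sdiff_insert_of_notMem he,
      Finset.card_insert_of_notMem heF]
    split_ifs <;> ring

theorem sampleProb_true : sampleProb E α (fun _ => True) = 1 := by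
  induction E using Finset.induction_on with
  | empty => simp [sampleProb_empty]
  | insert e E he ih => rw [sampleProb_insert he, ih]; ring

theorem sampleProb_le_one (hα0 : 0 ≤ α) (hα1 : α ≤ 1) (S : Finset ι → Prop) :
    sampleProb E α S ≤ 1 :=
  sampleProb_true (E := E) (α := α) ▸ sampleProb_mono hα0 hα1 fun _ _ _ => trivial

theorem sampleProb_insert_le (hα0 : 0 ≤ α) (hα1 : α ≤ 1) {e : ι} (he : e ∉ E)
    (hS : Monotone S) :
    sampleProb (insert e E) α S ≤ sampleProb E α (fun F => S (insert e F)) := by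
  have h := sampleProb_mono (E := E) hα0 hα1 fun F _ => hS (Finset.subset_insert e F)
  rw [sampleProb_insert he]
  nlinarith

/-- Harris' inequality. -/
theorem sampleProb_mul_le_and (hα0 : 0 ≤ α) (hα1 : α ≤ 1) (hS : Monotone S)
    (hT : Monotone T) :
    sampleProb E α S * sampleProb E α T ≤ sampleProb E α (fun F => S F ∧ T F) := by
  induction E using Finset.induction_on generalizing S T with
  | empty =>
    by_cases hS0 : S ∅ <;> by_cases hT0 : T ∅ <;> simp [sampleProb_empty, hS0, hT0]
  | insert e E he ih =>
    have hS' : Monotone fun F => S (insert e F) := fun _ _ h => hS (Finset.insert_subset_insert e h)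
    have hT' : Monotone fun F => T (insert e F) := fun _ _ h => hT (Finset.insert_subset_insert e h)
    have hSS' := sampleProb_mono (E := E) hα0 hα1 fun F _ => hS (Finset.subset_insert e F)
    have hTT' := sampleProb_mono (E := E) hα0 hα1 fun F _ => hT (Finset.subset_insert e F)
    have := ih hS hT
    have := ih hS' hT'
    rw [sampleProb_insert he, sampleProb_insert he, sampleProb_insert he]
    nlinarith [mul_nonneg (mul_nonneg hα0 (sub_nonneg.2 hα1))
      (mul_nonneg (sub_nonneg.2 hSS') (sub_nonneg.2 hTT')), sampleProb_nonneg (E := E) hα0 hα1 S,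
      sampleProb_nonneg (E := E) hα0 hα1 T]

theorem sampleProb_and_not_le (hα0 : 0 ≤ α) (hα1 : α ≤ 1) (hS : Monotone S)
    (hT : Monotone T) :
    sampleProb E α (fun F => S F ∧ ¬ T F) ≤ sampleProb E α S * (1 - sampleProb E α T) := by
  have := sampleProb_and_add_and_not (E := E) (α := α) S T
  nlinarith [sampleProb_mul_le_and (E := E) hα0 hα1 hS hT]

theorem sampleProb_and_eq_mul (p : ι → Prop) [DecidablePred p]
    (hS : ∀ F, S F ↔ S (F.filter p)) (hT : ∀ F, T F ↔ T (F.filter fun i => ¬ p i)) :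
    sampleProb E α (fun F => S F ∧ T F) = sampleProb E α S * sampleProb E α T := by
  induction E using Finset.induction_on generalizing S T with
  | empty =>
    by_cases hS0 : S ∅ <;> by_cases hT0 : T ∅ <;> simp [sampleProb_empty, hS0, hT0]
  | insert e E he ih =>
    simp only [sampleProb_insert he]
    by_cases hp : p e
    · have hS' : ∀ F, S (insert e F) ↔ S (insert e (F.filter p)) := fun F => by
        rw [hS, Finset.filter_insert, if_pos hp]
      have hT' : ∀ F ⊆ E, (T (insert e F) ↔ T F) := fun F _ => by
        rw [hT, Finset.filter_insert, if_neg (not_not.2 hp), ← hT]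
      rw [sampleProb_congr (S := fun F => S (insert e F) ∧ T (insert e F))
          fun F hF => and_congr_right fun _ => hT' F hF,
        sampleProb_congr hT', ih hS hT, ih (S := fun F => S (insert e F)) hS' hT]
      ring
    · have hS' : ∀ F ⊆ E, (S (insert e F) ↔ S F) := fun F _ => by
        rw [hS, Finset.filter_insert, if_neg hp, ← hS]
      have hT' : ∀ F, T (insert e F) ↔ T (insert e (F.filter fun i => ¬ p i)) := fun F => by
        rw [hT, Finset.filter_insert, if_pos hp]
      rw [sampleProb_congr (S := fun F => S (insert e F) ∧ T (insert e F))
          fun F hF => and_congr_left fun _ => hS' F hF,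
        sampleProb_congr hS', ih hS hT, ih (T := fun F => T (insert e F)) hS hT']
      ring

end Sampling

open SimpleGraph

omit [Fintype V] [DecidableEq V] in
theorem SimpleGraph.Reachable.mem_of_adj_closed {G : SimpleGraph V} {C : Set V} {u v : V}
    (hC : ∀ x y, x ∈ C → G.Adj x y → y ∈ C) (h : G.Reachable u v) (hu : u ∈ C) : v ∈ C := by
  rw [reachable_iff_reflTransGen] at h
  induction h with
  | refl => exact hu
  | tail _ hxy ih => exact hC _ _ ih hxy

omit [Fintype V] [DecidableEq V] in
def edgeGraph (F : Finset (Sym2 V)) : SimpleGraph V :=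
  fromEdgeSet F

local notation:50 u:51 " ~[" F "] " v:51 => SimpleGraph.Reachable (edgeGraph F) u v

section EdgeGraph

variable {F F' : Finset (Sym2 V)} {u v x y : V}

omit [Fintype V] [DecidableEq V] in
theorem edgeGraph_adj : (edgeGraph F).Adj x y ↔ s(x, y) ∈ F ∧ x ≠ y := by
  simp [edgeGraph]

omit [Fintype V] [DecidableEq V] in
theorem edgeGraph_filter_adj {p : Sym2 V → Prop} [DecidablePred p] :
    (edgeGraph (F.filter p)).Adj x y ↔ (edgeGraph F).Adj x y ∧ p s(x, y) := by
  simp only [edgeGraph_adj, Finset.mem_filter]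
  tauto

omit [Fintype V] [DecidableEq V] in
theorem edgeGraph_reachable_mono (h : F ⊆ F') (huv : u ~[F] v) : u ~[F'] v :=
  huv.mono (fromEdgeSet_mono (Finset.coe_subset.2 h))

omit [Fintype V] [DecidableEq V] in
theorem monotone_edgeGraph_reachable (u v : V) :
    Monotone fun F : Finset (Sym2 V) => u ~[F] v :=
  fun _ _ h => edgeGraph_reachable_mono h

omit [Fintype V] in
theorem edgeGraph_insert_reachable {a b : V} (h : u ~[insert s(a, b) F] v) :
    u ~[F] v ∨ (u ~[F] a ∧ b ~[F] v) ∨ (u ~[F] b ∧ a ~[F] v) := by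
  refine h.mem_of_adj_closed (C := {x | u ~[F] x ∨ (u ~[F] a ∧ b ~[F] x) ∨ (u ~[F] b ∧ a ~[F] x)})
    (fun x y hx hxy => ?_) (Or.inl (Reachable.refl u))
  rw [edgeGraph_adj, Finset.mem_insert, Sym2.eq_iff] at hxy
  obtain ⟨(⟨rfl, rfl⟩ | ⟨rfl, rfl⟩) | hF, hne⟩ := hxy
  · rcases hx with h | ⟨h, -⟩ | ⟨h, -⟩
    exacts [Or.inr (Or.inl ⟨h, .refl _⟩), Or.inr (Or.inl ⟨h, .refl _⟩), Or.inl h]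
  · rcases hx with h | ⟨h, -⟩ | ⟨h, -⟩
    exacts [Or.inr (Or.inr ⟨h, .refl _⟩), Or.inl h, Or.inr (Or.inr ⟨h, .refl _⟩)]
  · have hxy : x ~[F] y := (edgeGraph_adj.2 ⟨hF, hne⟩).reachable
    rcases hx with h | ⟨h, h'⟩ | ⟨h, h'⟩
    exacts [Or.inl (h.trans hxy), Or.inr (Or.inl ⟨h, h'.trans hxy⟩),
      Or.inr (Or.inr ⟨h, h'.trans hxy⟩)]

end EdgeGraph

section Component

noncomputable def component (F : Finset (Sym2 V)) (s : V) : Finset V :=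
  Finset.univ.filter fun x => s ~[F] x

variable {F : Finset (Sym2 V)} {s u v x : V} {C : Finset V}

theorem mem_component : x ∈ component F s ↔ s ~[F] x := by
  simp [component]

theorem component_eq_iff_filter :
    component F s = C ↔ component (F.filter fun e => ∃ x ∈ e, x ∈ C) s = C := by
  set F₁ := F.filter fun e => ∃ x ∈ e, x ∈ C
  have touch : ∀ {x y}, x ∈ C → (edgeGraph F).Adj x y → (edgeGraph F₁).Adj x y :=
    fun {x _} hx hxy => edgeGraph_filter_adj.2 ⟨hxy, x, Sym2.mem_mk_left x _, hx⟩
  simp only [Finset.ext_iff, mem_component]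
  constructor
  · intro h x
    refine ⟨fun hx => (h x).1 (edgeGraph_reachable_mono (Finset.filter_subset _ _) hx),
      fun hx => (((h x).2 hx).mem_of_adj_closed (C := {y | s ~[F₁] y ∧ y ∈ C}) ?_
        ⟨.refl s, (h s).1 (.refl s)⟩).1⟩
    rintro y z ⟨hy, hyC⟩ hyz
    exact ⟨hy.trans (touch hyC hyz).reachable, (h z).1 (((h y).2 hyC).trans hyz.reachable)⟩
  · intro h x
    refine ⟨fun hx => hx.mem_of_adj_closed (C := {y | y ∈ C}) ?_ ((h s).1 (.refl s)),
      fun hx => edgeGraph_reachable_mono (Finset.filter_subset _ _) ((h x).2 hx)⟩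
    exact fun y z hy hyz => (h z).1 (((h y).2 hy).trans (touch hy hyz).reachable)

theorem reachable_filter_of_notMem_component (hu : u ∉ component F s) (h : u ~[F] v) :
    u ~[F.filter fun e => ¬∃ x ∈ e, x ∈ component F s] v := by
  refine (h.mem_of_adj_closed (C := {y | y ∉ component F s ∧
    u ~[F.filter fun e => ¬∃ x ∈ e, x ∈ component F s] y}) ?_ ⟨hu, .refl u⟩).2
  rintro y z ⟨hy, huy⟩ hyz
  have hz : z ∉ component F s := fun hz =>
    hy (mem_component.2 ((mem_component.1 hz).trans hyz.symm.reachable))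
  exact ⟨hz, huy.trans (edgeGraph_filter_adj.2 ⟨hyz, by simp [hy, hz]⟩).reachable⟩

end Component

section Proximity

variable {E : Finset (Sym2 V)} {α : ℝ}

theorem prox_eq_sampleProb (E : Finset (Sym2 V)) (α : ℝ) (u v : V) :
    prox E α u v = sampleProb E α (fun F => u ~[F] v) := by
  unfold prox sampleProb edgeGraph
  congr!

theorem prox_nonneg (hα0 : 0 ≤ α) (hα1 : α ≤ 1) (u v : V) : 0 ≤ prox E α u v :=
  prox_eq_sampleProb E α u v ▸ sampleProb_nonneg hα0 hα1 _

theorem prox_le_one (hα0 : 0 ≤ α) (hα1 : α ≤ 1) (u v : V) : prox E α u v ≤ 1 :=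
  prox_eq_sampleProb E α u v ▸ sampleProb_le_one hα0 hα1 _

theorem prox_self (u : V) : prox E α u u = 1 := by
  rw [prox_eq_sampleProb, sampleProb_congr fun F _ => iff_true_intro (Reachable.refl u),
    sampleProb_true]

theorem prox_comm (u v : V) : prox E α u v = prox E α v u := by
  simp only [prox_eq_sampleProb, reachable_comm]

theorem prox_mul_le (hα0 : 0 ≤ α) (hα1 : α ≤ 1) (u z v : V) :
    prox E α u z * prox E α z v ≤ prox E α u v := by
  simp only [prox_eq_sampleProb]
  exact (sampleProb_mul_le_and hα0 hα1 (monotone_edgeGraph_reachable u z)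
    (monotone_edgeGraph_reachable z v)).trans
      (sampleProb_mono hα0 hα1 fun _ _ h => h.1.trans h.2)

theorem prox_insert_le (hα0 : 0 ≤ α) (hα1 : α ≤ 1) {a b : V} (he : s(a, b) ∉ E) (w v : V) :
    prox (insert s(a, b) E) α w v ≤ prox E α w v
      + sampleProb E α (fun F => w ~[F] a ∧ v ~[F] b ∧ ¬ w ~[F] v)
      + sampleProb E α (fun F => w ~[F] b ∧ v ~[F] a ∧ ¬ w ~[F] v) := by
  rw [prox_eq_sampleProb, prox_eq_sampleProb, add_assoc]
  calc sampleProb (insert s(a, b) E) α (fun F => w ~[F] v)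
      ≤ sampleProb E α (fun F => w ~[insert s(a, b) F] v) :=
        sampleProb_insert_le hα0 hα1 he (monotone_edgeGraph_reachable w v)
    _ ≤ sampleProb E α (fun F => w ~[F] v ∨ ((w ~[F] a ∧ v ~[F] b ∧ ¬ w ~[F] v) ∨
          (w ~[F] b ∧ v ~[F] a ∧ ¬ w ~[F] v))) := by
        refine sampleProb_mono hα0 hα1 fun F _ h => ?_
        by_cases hwv : w ~[F] v
        · exact Or.inl hwv
        rcases edgeGraph_insert_reachable h with h | ⟨h₁, h₂⟩ | ⟨h₁, h₂⟩
        exacts [absurd h hwv, Or.inr (Or.inl ⟨h₁, h₂.symm, hwv⟩),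
          Or.inr (Or.inr ⟨h₁, h₂.symm, hwv⟩)]
    _ ≤ _ :=
        (sampleProb_or_le hα0 hα1 _ _).trans (by gcongr; exact sampleProb_or_le hα0 hα1 _ _)

/-- The event that `w` reaches `a` while not reaching `s` only involves edges away from the
component of `s`, which are independent of that component. -/
theorem sampleProb_separated_le (hα0 : 0 ≤ α) (hα1 : α ≤ 1) (w a s b : V) :
    sampleProb E α (fun F => w ~[F] a ∧ s ~[F] b ∧ ¬ w ~[F] s) ≤
      prox E α w a * sampleProb E α (fun F => s ~[F] b ∧ ¬ s ~[F] a) := by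
  set good : Finset V → Prop := fun C => b ∈ C ∧ a ∉ C ∧ w ∉ C
  have hfiber : ∀ C, sampleProb E α
      (fun F => (w ~[F] a ∧ s ~[F] b ∧ ¬ w ~[F] s) ∧ component F s = C) ≤
        prox E α w a * sampleProb E α (fun F => good (component F s) ∧ component F s = C) := by
    intro C
    set outside : Finset (Sym2 V) → Finset (Sym2 V) :=
      fun F => F.filter fun e => ¬∃ x ∈ e, x ∈ C
    calc _ ≤ sampleProb E α (fun F => (good C ∧ component F s = C) ∧ w ~[outside F] a) := by
          refine sampleProb_mono hα0 hα1 fun F _ ⟨⟨hwa, hsb, hws⟩, hC⟩ => ?_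
          subst hC
          have hwC : w ∉ component F s := fun hw => hws (mem_component.1 hw).symm
          have haC : a ∉ component F s := fun ha => hws (hwa.trans (mem_component.1 ha).symm)
          exact ⟨⟨⟨mem_component.2 hsb, haC, hwC⟩, rfl⟩,
            reachable_filter_of_notMem_component hwC hwa⟩
      _ = sampleProb E α (fun F => good C ∧ component F s = C) *
            sampleProb E α (fun F => w ~[outside F] a) :=
          sampleProb_and_eq_mul (fun e => ∃ x ∈ e, x ∈ C)
            (fun F => and_congr_right fun _ => component_eq_iff_filter)
            (fun F => by simp only [outside, Finset.filter_filter, and_self])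
      _ ≤ sampleProb E α (fun F => good C ∧ component F s = C) * prox E α w a := by
          rw [prox_eq_sampleProb]
          exact mul_le_mul_of_nonneg_left (sampleProb_mono hα0 hα1 fun F _ =>
            edgeGraph_reachable_mono (Finset.filter_subset _ F)) (sampleProb_nonneg hα0 hα1 _)
      _ = _ := by
          rw [mul_comm]
          congr 1
          exact sampleProb_congr fun F _ =>
            ⟨fun ⟨hg, hC⟩ => ⟨hC ▸ hg, hC⟩, fun ⟨hg, hC⟩ => ⟨hC ▸ hg, hC⟩⟩
  calc _ = ∑ C, sampleProb E α
        (fun F => (w ~[F] a ∧ s ~[F] b ∧ ¬ w ~[F] s) ∧ component F s = C) :=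
        sampleProb_eq_sum_fiber _ _
    _ ≤ ∑ C, prox E α w a *
          sampleProb E α (fun F => good (component F s) ∧ component F s = C) :=
        Finset.sum_le_sum fun C _ => hfiber C
    _ = prox E α w a * sampleProb E α (fun F => good (component F s)) := by
        rw [← Finset.mul_sum, ← sampleProb_eq_sum_fiber]
    _ ≤ _ := mul_le_mul_of_nonneg_left (sampleProb_mono hα0 hα1 fun F _ ⟨hb, ha, _⟩ =>
        ⟨mem_component.1 hb, fun h => ha (mem_component.2 h)⟩) (prox_nonneg hα0 hα1 w a)

end Proximity

section Centers

variable {E : Finset (Sym2 V)} {α : ℝ}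

theorem prox_insert_le_two_mul (hα0 : 0 ≤ α) (hα1 : α ≤ 1) {a b : V} (he : s(a, b) ∉ E)
    {w v : V} {M : ℝ} (hv : prox E α w v ≤ M) (hb : prox E α w b ≤ M)
    (hab : prox E α w a * prox E α v b ≤ M) :
    prox (insert s(a, b) E) α w v ≤ 2 * M := by
  have hγ0 : 0 ≤ prox E α v a := prox_nonneg hα0 hα1 v a
  have hγ1 : prox E α v a ≤ 1 := prox_le_one hα0 hα1 v a
  have hthrough_a : sampleProb E α (fun F => w ~[F] a ∧ v ~[F] b ∧ ¬ w ~[F] v) ≤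
      M * (1 - prox E α v a) :=
    calc _ ≤ prox E α w a * sampleProb E α (fun F => v ~[F] b ∧ ¬ v ~[F] a) :=
          sampleProb_separated_le hα0 hα1 w a v b
      _ ≤ prox E α w a * (prox E α v b * (1 - prox E α v a)) := by
          rw [prox_eq_sampleProb E α v b, prox_eq_sampleProb E α v a]
          exact mul_le_mul_of_nonneg_left (sampleProb_and_not_le hα0 hα1
            (monotone_edgeGraph_reachable v b) (monotone_edgeGraph_reachable v a))
            (prox_nonneg hα0 hα1 w a)
      _ ≤ M * (1 - prox E α v a) := by
          rw [← mul_assoc]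
          exact mul_le_mul_of_nonneg_right hab (sub_nonneg.2 hγ1)
  have hthrough_b : sampleProb E α (fun F => w ~[F] b ∧ v ~[F] a ∧ ¬ w ~[F] v) ≤
      M * prox E α v a :=
    calc _ ≤ prox E α w b * sampleProb E α (fun F => v ~[F] a ∧ ¬ v ~[F] b) :=
          sampleProb_separated_le hα0 hα1 w b v a
      _ ≤ prox E α w b * prox E α v a := by
          rw [prox_eq_sampleProb E α v a]
          exact mul_le_mul_of_nonneg_left (sampleProb_mono hα0 hα1 fun _ _ h => h.1)
            (prox_nonneg hα0 hα1 w b)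
      _ ≤ M * prox E α v a := mul_le_mul_of_nonneg_right hb hγ0
  linarith [prox_insert_le hα0 hα1 he w v]

def Covers (E : Finset (Sym2 V)) (α : ℝ) (X : Finset V) (L : ℝ) : Prop :=
  ∀ w, ∃ s ∈ X, L ≤ prox E α w s

theorem Covers.insert_of_le (hα0 : 0 ≤ α) (hα1 : α ≤ 1) {a b sa : V} {X : Finset V} {L : ℝ}
    (he : s(a, b) ∉ E) (hsa : sa ∈ X) (hb : ∀ s ∈ X, prox E α b s ≤ prox E α a sa)
    (hX : Covers (insert s(a, b) E) α X L) : Covers E α (insert b X) (L / 2) := by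
  intro w
  obtain ⟨s, hs, hL⟩ := hX w
  obtain ⟨t, ht, hmax⟩ :=
    (insert b X).exists_max_image (prox E α w) (Finset.insert_nonempty b X)
  refine ⟨t, ht, ?_⟩
  have hab : prox E α w a * prox E α s b ≤ prox E α w t :=
    calc _ ≤ prox E α w a * prox E α a sa := mul_le_mul_of_nonneg_left
          (prox_comm (E := E) (α := α) s b ▸ hb s hs) (prox_nonneg hα0 hα1 w a)
      _ ≤ prox E α w sa := prox_mul_le hα0 hα1 w a sa
      _ ≤ prox E α w t := hmax sa (Finset.mem_insert_of_mem hsa)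
  linarith [prox_insert_le_two_mul hα0 hα1 he (hmax s (Finset.mem_insert_of_mem hs))
    (hmax b (Finset.mem_insert_self b X)) hab]

theorem Covers.exists_insert (hα0 : 0 ≤ α) (hα1 : α ≤ 1) {e : Sym2 V} {X : Finset V} {L : ℝ}
    (he : e ∉ E) (hne : X.Nonempty) (hX : Covers (insert e E) α X L) :
    ∃ c, Covers E α (insert c X) (L / 2) := by
  induction e using Sym2.ind with | _ a b => ?_
  obtain ⟨sa, hsa, hmax_a⟩ := X.exists_max_image (prox E α a) hne
  obtain ⟨sb, hsb, hmax_b⟩ := X.exists_max_image (prox E α b) hne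
  rcases le_total (prox E α b sb) (prox E α a sa) with h | h
  · exact ⟨b, hX.insert_of_le hα0 hα1 he hsa fun s hs => (hmax_b s hs).trans h⟩
  · rw [Sym2.eq_swap] at he hX
    exact ⟨a, hX.insert_of_le hα0 hα1 he hsb fun s hs => (hmax_a s hs).trans h⟩

theorem Covers.exists_of_union (hα0 : 0 ≤ α) (hα1 : α ≤ 1) {D : Finset (Sym2 V)}
    (hD : ∀ e ∈ D, e ∉ E) {X : Finset V} {L : ℝ} (hne : X.Nonempty)
    (hX : Covers (E ∪ D) α X L) :
    ∃ Y : Finset V, Y.card ≤ X.card + D.card ∧ Covers E α Y (L / 2 ^ D.card) := by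
  induction D using Finset.induction_on generalizing X L with
  | empty => exact ⟨X, by simp, by simpa using hX⟩
  | insert f D hf ih =>
    have hfE : f ∉ E ∪ D := by
      simpa [not_or] using ⟨hD f (Finset.mem_insert_self f D), hf⟩
    rw [Finset.union_insert] at hX
    obtain ⟨c, hc⟩ := hX.exists_insert hα0 hα1 hfE hne
    obtain ⟨Y, hYcard, hY⟩ :=
      ih (fun e he => hD e (Finset.mem_insert_of_mem he)) (Finset.insert_nonempty c X) hc
    refine ⟨Y, ?_, ?_⟩
    · have := Finset.card_insert_le c X
      rw [Finset.card_insert_of_notMem hf]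
      omega
    · rwa [Finset.card_insert_of_notMem hf, pow_succ', ← div_div]

end Centers

section Broadcast

variable {E : Finset (Sym2 V)} {α : ℝ}

theorem broadcast_nonneg (hα0 : 0 ≤ α) (hα1 : α ≤ 1) : 0 ≤ broadcast E α :=
  Real.iInf_nonneg fun _ => prox_nonneg hα0 hα1 _ _

theorem broadcast_le_prox {u v : V} (huv : u ≠ v) : broadcast E α ≤ prox E α u v :=
  ciInf_le (Set.finite_range _).bddBelow (⟨(u, v), huv⟩ : {p : V × V // p.1 ≠ p.2})

theorem broadcast_le_one (hα0 : 0 ≤ α) (hα1 : α ≤ 1) : broadcast E α ≤ 1 := by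
  rcases isEmpty_or_nonempty {p : V × V // p.1 ≠ p.2} with h | ⟨⟨⟨u, v⟩, huv⟩⟩
  · rw [broadcast, Real.iInf_of_isEmpty]
    exact zero_le_one
  · exact (broadcast_le_prox huv).trans (prox_le_one hα0 hα1 u v)

theorem covers_singleton_broadcast (hα0 : 0 ≤ α) (hα1 : α ≤ 1) (v : V) :
    Covers E α {v} (broadcast E α) := by
  intro w
  refine ⟨v, Finset.mem_singleton_self v, ?_⟩
  rcases eq_or_ne w v with rfl | hwv
  · rw [prox_self]
    exact broadcast_le_one hα0 hα1
  · exact broadcast_le_prox hwv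

end Broadcast

/-- close-center lemma. There are at most `k + 1` centers such that
every vertex has proximity at least `β*/2^{k+1}` to some center. -/
theorem close_center
    (E : Finset (Sym2 V)) (α : ℝ) (hα0 : 0 ≤ α) (hα1 : α ≤ 1) (k : ℕ) :
    ∃ X : Finset V, X.card ≤ k + 1 ∧
      ∀ w : V, ∃ s ∈ X, optBroadcast E α k / 2 ^ (k + 1) ≤ prox E α w s := by
  rcases isEmpty_or_nonempty V with hV | ⟨⟨v⟩⟩
  · exact ⟨∅, by simp, fun w => isEmptyElim w⟩
  have : Nonempty {F : Finset (Sym2 V) // F.card ≤ k ∧ ∀ e ∈ F, e ∉ E} := ⟨⟨∅, by simp⟩⟩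
  obtain ⟨⟨F, hFk, hFE⟩, hF⟩ := exists_eq_ciSup_of_finite
    (f := fun F : {F : Finset (Sym2 V) // F.card ≤ k ∧ ∀ e ∈ F, e ∉ E} => broadcast (E ∪ F.1) α)
  obtain ⟨X, hXcard, hX⟩ := (covers_singleton_broadcast (E := E ∪ F) hα0 hα1 v).exists_of_union
    hα0 hα1 hFE (Finset.singleton_nonempty v)
  refine ⟨X, by simp only [Finset.card_singleton] at hXcard; omega, fun w => ?_⟩
  obtain ⟨s, hs, hws⟩ := hX w
  refine ⟨s, hs, le_trans ?_ hws⟩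
  rw [optBroadcast, ← hF]
  exact div_le_div_of_nonneg_left (broadcast_nonneg hα0 hα1) (by positivity)
    (pow_le_pow_right₀ one_le_two (by omega))
end
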